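/- For any reals $x, \delta$ and $p \geq 2$, we have $\frac{p}{8}|x|^{p-2}\delta^2 + \frac{1}{2^{p+1}}|\delta|^p \leq |x+\delta|^p - |x|^p - p|x|^{p-2}x\,\delta \leq 2p^2 |x|^{p-2}\delta^2 + p^p |\delta|^p$. -/

import Mathlib

/-!
Both sides scale by `|λ| ^ p` under `(x, δ) ↦ (λ x, λ δ)`, so for `x ≠ 0` it suffices to bound
`f t = |1 + t| ^ p - 1 - p t` at `t = δ / x`. From below, Bernoulli's inequality applied to
`(1 + t) ^ 2 = 1 + (2 t + t ^ 2)` with exponent `p / 2` gives `f t ≥ p / 2 * t ^ 2`, and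
`f t ≥ |t| ^ p / 2 ^ p` follows by comparing `|1 + t|` with `|t|`. From above, on
`-1 ≤ t ≤ 1 / (p - 1)` the function `1 + p t + 2 p ^ 2 t ^ 2 - (1 + t) ^ p` vanishes at `0` and its
derivative has the sign of `t` (Bernoulli for `t < 0`, `(1 + t) ^ (p - 1) ≤ exp ((p - 1) t)` for
`t > 0`); outside that range `|1 + t| ≤ p |t|`.
-/

open Real

noncomputable def bregmanAbsRpow (p x δ : ℝ) : ℝ :=
  |x + δ| ^ p - |x| ^ p - p * |x| ^ (p - 2) * x * δ

lemma bregmanAbsRpow_one_left (p t : ℝ) : bregmanAbsRpow p 1 t = |1 + t| ^ p - 1 - p * t := by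
  simp [bregmanAbsRpow]

lemma bregmanAbsRpow_zero_left {p : ℝ} (hp : p ≠ 0) (δ : ℝ) : bregmanAbsRpow p 0 δ = |δ| ^ p := by
  simp [bregmanAbsRpow, zero_rpow hp]

lemma abs_rpow_sub_two_mul_sq {x : ℝ} (hx : x ≠ 0) (p : ℝ) : |x| ^ (p - 2) * x ^ 2 = |x| ^ p := by
  rw [rpow_sub (abs_pos.mpr hx), rpow_two, sq_abs, div_mul_cancel₀ _ (by positivity)]

lemma bregmanAbsRpow_eq_abs_rpow_mul {x : ℝ} (hx : x ≠ 0) (p δ : ℝ) :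
    bregmanAbsRpow p x δ = |x| ^ p * bregmanAbsRpow p 1 (δ / x) := by
  have hsplit : |x + δ| = |x| * |1 + δ / x| := by
    rw [← abs_mul, mul_add, mul_one, mul_div_cancel₀ _ hx]
  have hlin : |x| ^ (p - 2) * x * δ = |x| ^ p * (δ / x) := by
    rw [← abs_rpow_sub_two_mul_sq hx p, mul_assoc, mul_assoc, sq, mul_assoc, mul_div_cancel₀ _ hx]
  rw [bregmanAbsRpow, bregmanAbsRpow_one_left, hsplit, mul_rpow (abs_nonneg _) (abs_nonneg _)]
  linear_combination (-p) * hlin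

lemma abs_rpow_sub_two_mul_sq_eq_mul_div_sq {x : ℝ} (hx : x ≠ 0) (p δ : ℝ) :
    |x| ^ (p - 2) * δ ^ 2 = |x| ^ p * (δ / x) ^ 2 := by
  rw [← abs_rpow_sub_two_mul_sq hx p, mul_assoc, ← mul_pow, mul_div_cancel₀ _ hx]

lemma abs_rpow_eq_abs_rpow_mul_abs_div_rpow {x : ℝ} (hx : x ≠ 0) (p δ : ℝ) :
    |δ| ^ p = |x| ^ p * |δ / x| ^ p := by
  rw [← mul_rpow (abs_nonneg _) (abs_nonneg _), ← abs_mul, mul_div_cancel₀ _ hx]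

lemma one_add_mul_add_half_mul_sq_le_abs_one_add_rpow {p : ℝ} (hp : 2 ≤ p) (t : ℝ) :
    1 + p * t + p / 2 * t ^ 2 ≤ |1 + t| ^ p := by
  have hbern := one_add_mul_self_le_rpow_one_add (s := 2 * t + t ^ 2)
    (by nlinarith [sq_nonneg (1 + t)]) (p := p / 2) (by linarith)
  rw [show 1 + (2 * t + t ^ 2) = |1 + t| ^ (2 : ℝ) by rw [rpow_two, sq_abs]; ring,
    ← rpow_mul (abs_nonneg _), mul_div_cancel₀ _ two_ne_zero] at hbern
  nlinarith [sq_nonneg t]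

lemma one_add_rpow_le_one_add_two_mul {q u : ℝ} (hq : 0 ≤ q) (hu : 0 ≤ u) (huq : u * q ≤ 1) :
    (1 + u) ^ q ≤ 1 + 2 * q * u := by
  calc (1 + u) ^ q ≤ exp u ^ q := rpow_le_rpow (by linarith) (by linarith [add_one_le_exp u]) hq
    _ = exp (u * q) := (exp_mul u q).symm
    _ ≤ 1 + 2 * q * u := by
      have huq0 : 0 ≤ u * q := mul_nonneg hu hq
      have := abs_exp_sub_one_le (x := u * q) (by rwa [abs_of_nonneg huq0])
      rw [abs_of_nonneg huq0] at this
      linarith [(abs_le.mp this).2]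

lemma one_add_rpow_le_one_add_mul_add_two_mul_sq {p t : ℝ} (hp : 2 ≤ p) (ht : -1 ≤ t)
    (ht' : t * (p - 1) ≤ 1) : (1 + t) ^ p ≤ 1 + p * t + 2 * p ^ 2 * t ^ 2 := by
  set k : ℝ → ℝ := fun u ↦ 1 + p * u + 2 * p ^ 2 * u ^ 2 - (1 + u) ^ p
  set k' : ℝ → ℝ := fun u ↦ p + 4 * p ^ 2 * u - p * (1 + u) ^ (p - 1)
  have hk : ∀ u, HasDerivAt k (k' u) u := fun u ↦ by
    have hpow := ((hasDerivAt_id u).const_add 1).rpow_const (p := p) (Or.inr (by linarith))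
    refine ((((hasDerivAt_id u).const_mul p).const_add 1).add
      ((hasDerivAt_pow 2 u).const_mul (2 * p ^ 2))).sub hpow |>.congr_deriv ?_
    simp only [k', id]
    ring
  have hk_cont : Continuous k := continuous_iff_continuousAt.mpr fun u ↦ (hk u).continuousAt
  have hk0 : k 0 = 0 := by simp [k]
  suffices 0 ≤ k t by simp only [k] at this; linarith
  rcases le_total t 0 with ht0 | ht0
  · have hanti : AntitoneOn k (Set.Icc t 0) :=
      antitoneOn_of_hasDerivWithinAt_nonpos (convex_Icc t 0) hk_cont.continuousOn
        (fun u _ ↦ (hk u).hasDerivWithinAt) fun u hu ↦ by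
          rw [interior_Icc] at hu
          have hbern := one_add_mul_self_le_rpow_one_add (s := u) (by linarith [hu.1])
            (p := p - 1) (by linarith)
          simp only [k']
          nlinarith [mul_le_mul_of_nonneg_left hbern (by linarith : (0 : ℝ) ≤ p), hu.2]
    exact hk0 ▸ hanti ⟨le_rfl, ht0⟩ ⟨ht0, le_rfl⟩ ht0
  · have hmono : MonotoneOn k (Set.Icc 0 t) :=
      monotoneOn_of_hasDerivWithinAt_nonneg (convex_Icc 0 t) hk_cont.continuousOn
        (fun u _ ↦ (hk u).hasDerivWithinAt) fun u hu ↦ by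
          rw [interior_Icc] at hu
          have hup := one_add_rpow_le_one_add_two_mul (q := p - 1) (u := u) (by linarith)
            hu.1.le (by nlinarith [hu.2])
          simp only [k']
          nlinarith [mul_le_mul_of_nonneg_left hup (by linarith : (0 : ℝ) ≤ p), hu.1]
    exact hk0 ▸ hmono ⟨le_rfl, ht0⟩ ⟨ht0, le_rfl⟩ ht0

lemma abs_rpow_div_two_rpow_le {p : ℝ} (hp : 2 ≤ p) (t : ℝ) :
    |t| ^ p / 2 ^ p ≤ |1 + t| ^ p - 1 - p * t := by
  have hquad := one_add_mul_add_half_mul_sq_le_abs_one_add_rpow hp t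
  rw [← div_rpow (abs_nonneg t) zero_le_two]
  rcases le_or_gt |t| 2 with ht | ht
  · calc (|t| / 2) ^ p ≤ (|t| / 2) ^ (2 : ℝ) :=
          rpow_le_rpow_of_exponent_ge' (by positivity) (by linarith) zero_le_two hp
      _ ≤ |1 + t| ^ p - 1 - p * t := by
          rw [rpow_two, div_pow, sq_abs]; nlinarith [sq_nonneg t]
  rcases lt_abs.mp ht with ht | ht
  · -- Here `1 + p t ≤ 3 (|1 + t| ^ p - 1 - p t)`, so the divergence is at least `(1 + t) ^ p / 4`.
    have h4 : (4 : ℝ) ≤ 2 ^ p :=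
      calc (4 : ℝ) = 2 ^ (2 : ℝ) := by norm_num
        _ ≤ 2 ^ p := rpow_le_rpow_of_exponent_le one_le_two hp
    have hmono : |t| ^ p ≤ |1 + t| ^ p :=
      rpow_le_rpow (abs_nonneg t) (by rw [abs_of_pos, abs_of_pos] <;> linarith) (by linarith)
    have hdiv : |t| ^ p / 2 ^ p ≤ |t| ^ p / 4 :=
      div_le_div_of_nonneg_left (by positivity) (by norm_num) h4
    rw [div_rpow (abs_nonneg t) zero_le_two]
    nlinarith [mul_nonneg (by linarith : (0 : ℝ) ≤ p - 2) (by linarith : (0 : ℝ) ≤ t - 2)]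
  · calc (|t| / 2) ^ p ≤ |1 + t| ^ p :=
          rpow_le_rpow (by positivity) (by rw [abs_of_neg, abs_of_neg] <;> linarith) (by linarith)
      _ ≤ |1 + t| ^ p - 1 - p * t := by nlinarith

lemma abs_one_add_rpow_sub_le {p : ℝ} (hp : 2 ≤ p) (t : ℝ) :
    |1 + t| ^ p - 1 - p * t ≤ 2 * p ^ 2 * t ^ 2 + p ^ p * |t| ^ p := by
  have hpp : 1 ≤ p ^ p := one_le_rpow (by linarith) (by linarith)
  have htp : 0 ≤ |t| ^ p := by positivity
  by_cases hsmall : -1 ≤ t ∧ t * (p - 1) ≤ 1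
  · rw [abs_of_nonneg (by linarith [hsmall.1])]
    nlinarith [one_add_rpow_le_one_add_mul_add_two_mul_sq hp hsmall.1 hsmall.2]
  · have hbig : 1 < |t| * (p - 1) := by
      rcases not_and_or.mp hsmall with h | h
      · nlinarith [abs_of_neg (by linarith : t < 0)]
      · nlinarith [le_abs_self t]
    have hpow : |1 + t| ^ p ≤ p ^ p * |t| ^ p := by
      rw [← mul_rpow (by linarith) (abs_nonneg t)]
      exact rpow_le_rpow (abs_nonneg _) (by nlinarith [abs_add_le 1 t, abs_one (α := ℝ)])
        (by linarith)
    nlinarith [neg_abs_le t, abs_nonneg t, sq_abs t]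

lemma mul_sq_add_abs_rpow_le_abs_one_add_rpow_sub {p : ℝ} (hp : 2 ≤ p) (t : ℝ) :
    p / 8 * t ^ 2 + 1 / 2 ^ (p + 1) * |t| ^ p ≤ |1 + t| ^ p - 1 - p * t := by
  rw [rpow_add_one two_ne_zero]
  have hquad := one_add_mul_add_half_mul_sq_le_abs_one_add_rpow hp t
  have hpow := abs_rpow_div_two_rpow_le hp t
  have hcoef : 1 / (2 ^ p * 2) * |t| ^ p = |t| ^ p / 2 ^ p / 2 := by ring
  nlinarith [sq_nonneg t]

lemma le_bregmanAbsRpow {p : ℝ} (hp : 2 ≤ p) (x δ : ℝ) :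
    p / 8 * |x| ^ (p - 2) * δ ^ 2 + 1 / 2 ^ (p + 1) * |δ| ^ p ≤ bregmanAbsRpow p x δ := by
  rcases eq_or_ne x 0 with rfl | hx
  · rw [bregmanAbsRpow_zero_left (by linarith), abs_zero]
    rcases hp.eq_or_lt with rfl | hp
    · norm_num [rpow_two]
      nlinarith [sq_nonneg δ]
    · rw [zero_rpow (by linarith), mul_zero, zero_mul, zero_add]
      have : 1 ≤ (2 : ℝ) ^ (p + 1) := one_le_rpow one_le_two (by linarith)
      have : 1 / 2 ^ (p + 1) ≤ (1 : ℝ) := div_le_one_of_le₀ this (by positivity)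
      nlinarith [show 0 ≤ |δ| ^ p by positivity]
  · rw [bregmanAbsRpow_eq_abs_rpow_mul hx, bregmanAbsRpow_one_left, mul_assoc (p / 8),
      abs_rpow_sub_two_mul_sq_eq_mul_div_sq hx, abs_rpow_eq_abs_rpow_mul_abs_div_rpow hx p δ]
    linarith [mul_le_mul_of_nonneg_left (mul_sq_add_abs_rpow_le_abs_one_add_rpow_sub hp (δ / x))
      (by positivity : 0 ≤ |x| ^ p)]

lemma bregmanAbsRpow_le {p : ℝ} (hp : 2 ≤ p) (x δ : ℝ) :
    bregmanAbsRpow p x δ ≤ 2 * p ^ 2 * |x| ^ (p - 2) * δ ^ 2 + p ^ p * |δ| ^ p := by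
  rcases eq_or_ne x 0 with rfl | hx
  · rw [bregmanAbsRpow_zero_left (by linarith)]
    have : 1 ≤ p ^ p := one_le_rpow (by linarith) (by linarith)
    nlinarith [show 0 ≤ |δ| ^ p by positivity, show 0 ≤ |(0 : ℝ)| ^ (p - 2) * δ ^ 2 by positivity]
  · rw [bregmanAbsRpow_eq_abs_rpow_mul hx, bregmanAbsRpow_one_left, mul_assoc (2 * p ^ 2),
      abs_rpow_sub_two_mul_sq_eq_mul_div_sq hx, abs_rpow_eq_abs_rpow_mul_abs_div_rpow hx p δ]
    linarith [mul_le_mul_of_nonneg_left (abs_one_add_rpow_sub_le hp (δ / x))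
      (by positivity : 0 ≤ |x| ^ p)]

theorem stmt13 (p x δ : ℝ) (hp : 2 ≤ p) :
    (p / 8) * |x| ^ (p - 2) * δ ^ 2 + (1 / 2 ^ (p + 1)) * |δ| ^ p
      ≤ |x + δ| ^ p - |x| ^ p - p * |x| ^ (p - 2) * x * δ ∧
    |x + δ| ^ p - |x| ^ p - p * |x| ^ (p - 2) * x * δ
      ≤ 2 * p ^ 2 * |x| ^ (p - 2) * δ ^ 2 + p ^ p * |δ| ^ p :=
  ⟨le_bregmanAbsRpow hp x δ, bregmanAbsRpow_le hp x δ⟩
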